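/- Let A ∈ ℂ^{n×N}, let x0, x ∈ ℂ^n satisfy Re(x0^* x) > 0, and let γ = (1−t) x0 + t x for some t ∈ [0,1] (a convex combination, necessarily nonzero). Define λ2(γ) = sup{ ‖Im(B_γ^* u)‖ : u ∈ ℂ^n, Re(γ^* u) = 0, ‖u‖ = 1 }. Then ‖Im(B_γ^* (x − x0))‖ ≤ λ2(γ) · ‖x − x0‖. -/

import Mathlib

/-!
The map `u ↦ Im (B_γ^* u)` is `ℝ`-linear and vanishes at `γ`, since
`conj (phase (a_j^* γ)) * (a_j^* γ) = |a_j^* γ|` is real. So it takes the same value at `x - x0`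
as at the real-orthogonal projection of `x - x0` onto `{u | Re (γ^* u) = 0}`, which is no longer
than `x - x0`, and on that hyperplane it is bounded by `λ₂(γ) ‖u‖` by homogeneity.
-/

/-- `phase z = z/|z|`, with the convention `phase 0 = 1`. -/
noncomputable def phase (z : ℂ) : ℂ := if z = 0 then 1 else z / ((‖z‖ : ℝ) : ℂ)

open ComplexConjugate InnerProductSpace

theorem conj_phase_mul_self (z : ℂ) : conj (phase z) * z = ‖z‖ := by
  unfold phase
  split_ifs with hz
  · simp [hz]
  · have hz' : (‖z‖ : ℂ) ≠ 0 := by exact_mod_cast norm_ne_zero_iff.mpr hz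
    rw [map_div₀, Complex.conj_ofReal, div_mul_eq_mul_div, Complex.conj_mul', div_eq_iff hz', sq]

section RealInnerProductSpace

variable {E F : Type*} [NormedAddCommGroup E] [InnerProductSpace ℝ E]
  [SeminormedAddCommGroup F] [NormedSpace ℝ F]

theorem norm_apply_le_sSup_mul_norm_of_inner_eq_zero (T : E →L[ℝ] F) {γ u : E}
    (hu : ⟪γ, u⟫_ℝ = 0) :
    ‖T u‖ ≤ sSup {r | ∃ v, ⟪γ, v⟫_ℝ = 0 ∧ ‖v‖ = 1 ∧ r = ‖T v‖} * ‖u‖ := by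
  set S := {r | ∃ v, ⟪γ, v⟫_ℝ = 0 ∧ ‖v‖ = 1 ∧ r = ‖T v‖}
  rcases eq_or_ne u 0 with rfl | hu0
  · simp
  have hbdd : BddAbove S := ⟨‖T‖, by
    rintro r ⟨v, -, hv, rfl⟩
    simpa [hv] using T.le_opNorm v⟩
  have hunorm : 0 < ‖u‖ := norm_pos_iff.mpr hu0
  have hmem : ‖T (‖u‖⁻¹ • u)‖ ∈ S :=
    ⟨‖u‖⁻¹ • u, by simp [inner_smul_right, hu], by simp [norm_smul, hunorm.ne'], rfl⟩
  have hle := le_csSup hbdd hmem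
  rw [map_smul, norm_smul, norm_inv, norm_norm, inv_mul_le_iff₀ hunorm] at hle
  linarith

theorem apply_starProjection_orthogonal_singleton (T : E →L[ℝ] F) {γ : E} (hγ : T γ = 0)
    (d : E) : T ((ℝ ∙ γ)ᗮ.starProjection d) = T d := by
  obtain ⟨c, hc⟩ := Submodule.mem_span_singleton.mp ((ℝ ∙ γ).starProjection_apply_mem d)
  rw [Submodule.starProjection_orthogonal_val, map_sub, ← hc, map_smul, hγ, smul_zero, sub_zero]

theorem norm_apply_le_sSup_mul_norm_of_apply_eq_zero (T : E →L[ℝ] F) {γ : E} (hγ : T γ = 0)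
    (d : E) : ‖T d‖ ≤ sSup {r | ∃ v, ⟪γ, v⟫_ℝ = 0 ∧ ‖v‖ = 1 ∧ r = ‖T v‖} * ‖d‖ := by
  set u := (ℝ ∙ γ)ᗮ.starProjection d
  have hu : ⟪γ, u⟫_ℝ = 0 :=
    Submodule.mem_orthogonal_singleton_iff_inner_right.mp ((ℝ ∙ γ)ᗮ.starProjection_apply_mem d)
  have hsSup : 0 ≤ sSup {r | ∃ v, ⟪γ, v⟫_ℝ = 0 ∧ ‖v‖ = 1 ∧ r = ‖T v‖} :=
    Real.sSup_nonneg (by rintro r ⟨v, -, -, rfl⟩; positivity)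
  calc ‖T d‖ = ‖T u‖ := by rw [apply_starProjection_orthogonal_singleton T hγ]
    _ ≤ _ * ‖u‖ := norm_apply_le_sSup_mul_norm_of_inner_eq_zero T hu
    _ ≤ _ * ‖d‖ := mul_le_mul_of_nonneg_left ((ℝ ∙ γ)ᗮ.norm_starProjection_apply_le d) hsSup

end RealInnerProductSpace

/-- The real inner product on `EuclideanSpace ℂ ι` is the `PiLp` one, which agrees with
`re ⟪x, y⟫_ℂ` only propositionally. -/
theorem EuclideanSpace.real_inner_eq_re_inner {ι : Type*} [Fintype ι] (x y : EuclideanSpace ℂ ι) :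
    ⟪x, y⟫_ℝ = (⟪x, y⟫_ℂ).re := by
  simp [PiLp.inner_apply, Complex.re_sum]

section PhasedAdjoint

variable {ι κ : Type*} [Fintype ι]

noncomputable def imPhasedAdjoint (a : κ → EuclideanSpace ℂ ι) (γ : EuclideanSpace ℂ ι) :
    EuclideanSpace ℂ ι →ₗ[ℝ] EuclideanSpace ℝ κ where
  toFun u := WithLp.toLp 2 fun j => (conj (phase ⟪a j, γ⟫_ℂ) * ⟪a j, u⟫_ℂ).im
  map_add' u v := by ext j; simp [mul_add]
  map_smul' c u := by ext j; simp [mul_left_comm _ (c : ℂ)]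

theorem imPhasedAdjoint_self (a : κ → EuclideanSpace ℂ ι) (γ : EuclideanSpace ℂ ι) :
    imPhasedAdjoint a γ γ = 0 := by
  ext j
  simp only [imPhasedAdjoint, LinearMap.coe_mk, AddHom.coe_mk, conj_phase_mul_self]
  simp

theorem norm_imPhasedAdjoint_apply [Fintype κ] (a : κ → EuclideanSpace ℂ ι)
    (γ u : EuclideanSpace ℂ ι) :
    ‖imPhasedAdjoint a γ u‖ = √(∑ j, (conj (phase ⟪a j, γ⟫_ℂ) * ⟪a j, u⟫_ℂ).im ^ 2) := by
  simp [EuclideanSpace.norm_eq, imPhasedAdjoint]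

end PhasedAdjoint

theorem second_singular_value_bound_general {n N : ℕ} (a : Fin N → EuclideanSpace ℂ (Fin n))
    (x0 x : EuclideanSpace ℂ (Fin n))
    (γ : EuclideanSpace ℂ (Fin n))
    (Bstar : EuclideanSpace ℂ (Fin n) → EuclideanSpace ℂ (Fin n) → Fin N → ℂ)
    (hB : ∀ y ζ j, Bstar y ζ j =
      (starRingEnd ℂ) (phase (inner ℂ (a j) y : ℂ)) * (inner ℂ (a j) ζ : ℂ))
    (lam : ℝ)
    (hlam : lam = sSup {r : ℝ | ∃ u : EuclideanSpace ℂ (Fin n),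
      (inner ℂ γ u : ℂ).re = 0 ∧ ‖u‖ = 1 ∧
      r = Real.sqrt (∑ j, ((Bstar γ u j).im) ^ 2)}) :
    Real.sqrt (∑ j, ((Bstar γ (x - x0) j).im) ^ 2) ≤ lam * ‖x - x0‖ := by
  obtain rfl : Bstar = fun y ζ j => conj (phase ⟪a j, y⟫_ℂ) * ⟪a j, ζ⟫_ℂ := by
    funext y ζ j; exact hB y ζ j
  subst hlam
  have key := norm_apply_le_sSup_mul_norm_of_apply_eq_zero
    (imPhasedAdjoint a γ).toContinuousLinearMap (imPhasedAdjoint_self a γ) (x - x0)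
  simpa only [LinearMap.coe_toContinuousLinearMap', norm_imPhasedAdjoint_apply,
    EuclideanSpace.real_inner_eq_re_inner] using key

/-- if `Re(x0^* x) > 0` and `γ = (1-t)x0 + tx` is a convex combination of
`x0` and `x`, then `‖Im(B_γ^* (x - x0))‖ ≤ λ2(γ) ‖x - x0‖`, where
`(B_γ^* ζ) j = conj(phase(a_j^* γ)) · (a_j^* ζ)` (columns `a j` of `A`) and
`λ2(γ) = sup{ ‖Im(B_γ^* u)‖ : Re(γ^* u) = 0, ‖u‖ = 1 }`. -/
theorem second_singular_value_bound {n N : ℕ} (a : Fin N → EuclideanSpace ℂ (Fin n))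
    (x0 x : EuclideanSpace ℂ (Fin n))
    (hpos : 0 < (inner ℂ x0 x : ℂ).re)
    (t : ℝ) (ht0 : 0 ≤ t) (ht1 : t ≤ 1)
    (γ : EuclideanSpace ℂ (Fin n)) (hγ : γ = (1 - t) • x0 + t • x)
    (Bstar : EuclideanSpace ℂ (Fin n) → EuclideanSpace ℂ (Fin n) → Fin N → ℂ)
    (hB : ∀ y ζ j, Bstar y ζ j =
      (starRingEnd ℂ) (phase (inner ℂ (a j) y : ℂ)) * (inner ℂ (a j) ζ : ℂ))
    (lam : ℝ)
    (hlam : lam = sSup {r : ℝ | ∃ u : EuclideanSpace ℂ (Fin n),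
      (inner ℂ γ u : ℂ).re = 0 ∧ ‖u‖ = 1 ∧
      r = Real.sqrt (∑ j, ((Bstar γ u j).im) ^ 2)}) :
    Real.sqrt (∑ j, ((Bstar γ (x - x0) j).im) ^ 2) ≤ lam * ‖x - x0‖ :=
  second_singular_value_bound_general a x0 x γ Bstar hB lam hlam
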